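/- Let $r, m$ and $a_1,\ldots,a_r,b_1,\ldots,b_r$ be positive integers, and let $X=\prod_{i=1}^r K[a_i,b_i]$. Writing $\mathrm{CL}(t)$ for the set of cliques of order $t$ in $X$, one has $(m+1)\,|\mathrm{CL}(m+1)| = |\mathrm{CL}(m)|\cdot\prod_{i=1}^r \mathcal{S}_m(a_i,b_i)$. -/

import Mathlib

/-!
Double count the pairs `(s, v)` with `s` an `(m+1)`-clique and `v ∈ s`: removing `v` gives an
`m`-clique `t` together with a vertex adjacent to all of `t`, so `(m+1)|CL(m+1)|` is the sum over
`t ∈ CL(m)` of the size of the common neighbourhood of `t`. In a direct product that common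
neighbourhood is the product of the common neighbourhoods of the coordinate projections of `t`,
and an `m`-clique of `K[a,b]` meets `m` distinct parts, leaving `a(b-m)` common neighbours.
-/

/-- The balanced complete `b`-partite graph with partite sets of size `a`. -/
def balancedMultipartite (a b : ℕ) : SimpleGraph (Fin b × Fin a) where
  Adj u v := u.1 ≠ v.1
  symm := ⟨fun _ _ h => h.symm⟩
  loopless := ⟨fun _ h => h rfl⟩

/-- The direct (tensor) product of a nonempty family of graphs. -/
def directProd {r : ℕ} (hr : 0 < r) {V : Fin r → Type*}
    (G : ∀ i, SimpleGraph (V i)) : SimpleGraph (∀ i, V i) where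
  Adj f g := ∀ i, (G i).Adj (f i) (g i)
  symm := ⟨fun _ _ h i => (h i).symm⟩
  loopless := ⟨fun _ h => (G ⟨0, hr⟩).irrefl (h ⟨0, hr⟩)⟩

open Finset

namespace SimpleGraph

section CommonNeighbors

variable {α : Type*} [Fintype α] (G : SimpleGraph α) [DecidableRel G.Adj]

def commonNeighborFinset (s : Finset α) : Finset α := {v | ∀ u ∈ s, G.Adj v u}

variable {G}

@[simp]
theorem mem_commonNeighborFinset {s : Finset α} {v : α} :
    v ∈ G.commonNeighborFinset s ↔ ∀ u ∈ s, G.Adj v u := by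
  simp [commonNeighborFinset]

variable [DecidableEq α]

theorem ncard_setOf_isNClique (n : ℕ) : {s | G.IsNClique n s}.ncard = #(G.cliqueFinset n) := by
  rw [← Set.ncard_coe_finset, coe_cliqueFinset]
  rfl

theorem succ_mul_card_cliqueFinset_succ (n : ℕ) :
    (n + 1) * #(G.cliqueFinset (n + 1)) =
      ∑ t ∈ G.cliqueFinset n, #(G.commonNeighborFinset t) := by
  have hpairs : #((G.cliqueFinset (n + 1)).sigma id) =
      #((G.cliqueFinset n).sigma G.commonNeighborFinset) := by
    refine card_nbij' (fun p => ⟨p.1.erase p.2, p.2⟩) (fun p => ⟨insert p.2 p.1, p.2⟩)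
      ?_ ?_ ?_ ?_
    · rintro ⟨s, v⟩ hp
      simp only [coe_sigma, Set.mem_sigma_iff, mem_coe, mem_cliqueFinset_iff, id] at hp ⊢
      refine ⟨hp.1.erase_of_mem hp.2, mem_commonNeighborFinset.2 fun u hu => ?_⟩
      exact hp.1.1 hp.2 (mem_of_mem_erase hu) (ne_of_mem_erase hu).symm
    · rintro ⟨t, v⟩ hp
      simp only [coe_sigma, Set.mem_sigma_iff, mem_coe, mem_cliqueFinset_iff,
        mem_commonNeighborFinset, id] at hp ⊢
      exact ⟨hp.1.insert hp.2, mem_insert_self v t⟩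
    · rintro ⟨s, v⟩ hp
      simp only [coe_sigma, Set.mem_sigma_iff, mem_coe, id] at hp
      simp [insert_erase hp.2]
    · rintro ⟨t, v⟩ hp
      simp only [coe_sigma, Set.mem_sigma_iff, mem_coe, mem_commonNeighborFinset] at hp
      simp [erase_insert fun hv => G.loopless.irrefl v (hp.2 v hv)]
  rw [card_sigma, card_sigma] at hpairs
  rw [← hpairs]
  simp only [id, sum_congr rfl fun s hs => (mem_cliqueFinset_iff.1 hs).2, sum_const,
    smul_eq_mul, mul_comm]

end CommonNeighbors

theorem IsNClique.image_hom {α β : Type*} [DecidableEq β] {G : SimpleGraph α}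
    {H : SimpleGraph β} (f : G →g H) {n : ℕ} {s : Finset α} (hs : G.IsNClique n s) :
    H.IsNClique n (s.image f) := by
  have hinj : Set.InjOn f s := fun x hx y hy hxy => by
    by_contra hne
    have hadj := f.map_adj (hs.1 hx hy hne)
    rw [hxy] at hadj
    exact H.loopless.irrefl _ hadj
  refine ⟨?_, by rw [card_image_of_injOn hinj, hs.2]⟩
  rw [coe_image]
  rintro _ ⟨x, hx, rfl⟩ _ ⟨y, hy, rfl⟩ hne
  exact f.map_adj (hs.1 hx hy fun h => hne (congrArg f h))

end SimpleGraph

open SimpleGraph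

def directProdEval {r : ℕ} (hr : 0 < r) {V : Fin r → Type*} (G : ∀ i, SimpleGraph (V i))
    (i : Fin r) : directProd hr G →g G i :=
  ⟨fun f => f i, fun h => h i⟩

theorem commonNeighborFinset_directProd {r : ℕ} (hr : 0 < r) {V : Fin r → Type*}
    [∀ i, Fintype (V i)] [∀ i, DecidableEq (V i)] (G : ∀ i, SimpleGraph (V i))
    [∀ i, DecidableRel (G i).Adj] [DecidableRel (directProd hr G).Adj] (t : Finset (∀ i, V i)) :
    (directProd hr G).commonNeighborFinset t =
      Fintype.piFinset fun i => (G i).commonNeighborFinset (t.image (directProdEval hr G i)) := by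
  ext v
  simp only [mem_commonNeighborFinset, Fintype.mem_piFinset, mem_image, forall_exists_index,
    and_imp, forall_apply_eq_imp_iff₂]
  exact ⟨fun h i u hu => h u hu i, fun h u hu i => h i u hu⟩

theorem commonNeighborFinset_balancedMultipartite (a b : ℕ)
    [DecidableRel (balancedMultipartite a b).Adj] (s : Finset (Fin b × Fin a)) :
    (balancedMultipartite a b).commonNeighborFinset s = (s.image Prod.fst)ᶜ ×ˢ univ := by
  ext v
  simp only [mem_commonNeighborFinset, mem_product, mem_compl, mem_image, mem_univ, and_true,
    not_exists, not_and]
  exact forall₂_congr fun u _ => ne_comm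

theorem card_commonNeighborFinset_balancedMultipartite {a b n : ℕ}
    [DecidableRel (balancedMultipartite a b).Adj] {s : Finset (Fin b × Fin a)}
    (hs : (balancedMultipartite a b).IsNClique n s) :
    #((balancedMultipartite a b).commonNeighborFinset s) = a * (b - n) := by
  have hfst : #(s.image Prod.fst) = n := by
    rw [card_image_of_injOn fun u hu v hv huv => ?_, hs.2]
    by_contra hne
    exact hs.1 hu hv hne huv
  rw [commonNeighborFinset_balancedMultipartite, card_product, card_compl, hfst, card_univ,
    Fintype.card_fin, Fintype.card_fin, mul_comm]

theorem cliqueCount_recursion_general (r m : ℕ) (hr : 0 < r)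
    (a b : Fin r → ℕ) :
    (m + 1) *
      {s : Finset (∀ i : Fin r, Fin (b i) × Fin (a i)) |
        (directProd hr (fun i => balancedMultipartite (a i) (b i))).IsNClique (m + 1) s}.ncard
    = {s : Finset (∀ i : Fin r, Fin (b i) × Fin (a i)) |
        (directProd hr (fun i => balancedMultipartite (a i) (b i))).IsNClique m s}.ncard
      * ∏ i : Fin r, a i * (b i - m) := by
  classical
  set G := fun i => balancedMultipartite (a i) (b i)
  have hext : ∀ t ∈ (directProd hr G).cliqueFinset m,
      #((directProd hr G).commonNeighborFinset t) = ∏ i, a i * (b i - m) := fun t ht => by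
    rw [commonNeighborFinset_directProd, Fintype.card_piFinset]
    exact prod_congr rfl fun i _ => card_commonNeighborFinset_balancedMultipartite
      ((mem_cliqueFinset_iff.1 ht).image_hom (directProdEval hr G i))
  rw [ncard_setOf_isNClique, ncard_setOf_isNClique, succ_mul_card_cliqueFinset_succ,
    sum_congr rfl hext, sum_const, smul_eq_mul]

/-- Writing `CL(t)` for the set of cliques of order `t` in `X = ∏ K[aᵢ,bᵢ]`,
one has `(m+1)|CL(m+1)| = |CL(m)| · ∏ᵢ 𝒮_m(aᵢ,bᵢ)`, where
`𝒮_m(x,y) = max{x(y-m),0}` (truncated ℕ-subtraction). -/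
theorem cliqueCount_recursion (r m : ℕ) (hr : 0 < r) (hm : 0 < m)
    (a b : Fin r → ℕ) (ha : ∀ i, 0 < a i) (hb : ∀ i, 0 < b i) :
    (m + 1) *
      {s : Finset (∀ i : Fin r, Fin (b i) × Fin (a i)) |
        (directProd hr (fun i => balancedMultipartite (a i) (b i))).IsNClique (m + 1) s}.ncard
    = {s : Finset (∀ i : Fin r, Fin (b i) × Fin (a i)) |
        (directProd hr (fun i => balancedMultipartite (a i) (b i))).IsNClique m s}.ncard
      * ∏ i : Fin r, a i * (b i - m) :=
  cliqueCount_recursion_general r m hr a b
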